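/- Let p be a source and set λ = ⌈−lg p(1)⌉. Define the first-order Shannon code l¹ by l¹(1) = λ and l¹(i) = ⌈−lg( p(i)·(1 − 2^{−λ})/(1 − p(1)) )⌉ for 2 ≤ i ≤ n. Then l¹ is a valid codeword-length vector (positive integer entries satisfying the Kraft inequality ∑_i 2^{−l¹(i)} ≤ 1), and max_{2≤i≤n} (l¹(i) + lg p(i)) < 1 + lg((1 − p(1))/(1 − 2^{−λ})). -/

import Mathlib

/-- A source: a positive, monotonically nonincreasing probability mass function on `Fin n`. -/
def IsSource (n : ℕ) (p : Fin n → ℝ) : Prop :=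
  (∀ i, 0 < p i) ∧ (∑ i, p i = 1) ∧ (∀ i j : Fin n, i ≤ j → p j ≤ p i)

/-- A codeword-length vector: positive integer lengths satisfying the Kraft inequality. -/
def IsCLV (n : ℕ) (l : Fin n → ℤ) : Prop :=
  (∀ i, 1 ≤ l i) ∧ (∑ i, (2:ℝ) ^ (-(l i)) ≤ 1)

/-- Maximum pointwise redundancy `R*(l,p) = max_i (l(i) + lg p(i))`. -/
noncomputable def Rstar (n : ℕ) (l : Fin n → ℤ) (p : Fin n → ℝ) : ℝ :=
  ⨆ i : Fin n, ((l i : ℝ) + Real.logb 2 (p i))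

/-- Minimum maximum pointwise redundancy over all codeword-length vectors. -/
noncomputable def RstarOpt (n : ℕ) (p : Fin n → ℝ) : ℝ :=
  sInf {r : ℝ | ∃ l : Fin n → ℤ, IsCLV n l ∧ Rstar n l p = r}

/-! Shrinking every probability except `p a` by the factor `c = (1 - 2^{-λ}) / (1 - p a)` makes the
rescaled masses sum to `1 - 2^{-λ}`, exactly the Kraft budget left over by the codeword of length
`λ`; Shannon lengths of the rescaled masses therefore satisfy Kraft, and each exceeds
`-lg (p i) - lg c` by less than one. -/

open Finset Real

noncomputable def shannonLength (x : ℝ) : ℤ := ⌈-logb 2 x⌉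

lemma zpow_neg_shannonLength_le {x : ℝ} (hx : 0 < x) : (2 : ℝ) ^ (-shannonLength x) ≤ x := by
  have hexp : ((-shannonLength x : ℤ) : ℝ) ≤ logb 2 x := by
    have := Int.le_ceil (-logb 2 x)
    push_cast [shannonLength]
    linarith
  calc (2 : ℝ) ^ (-shannonLength x) = (2 : ℝ) ^ ((-shannonLength x : ℤ) : ℝ) :=
        (rpow_intCast 2 _).symm
    _ ≤ (2 : ℝ) ^ logb 2 x := rpow_le_rpow_of_exponent_le one_le_two hexp
    _ = x := rpow_logb two_pos (by norm_num) hx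

lemma zpow_neg_shannonLength_lt_one {x : ℝ} (hx0 : 0 < x) (hx1 : x < 1) :
    (2 : ℝ) ^ (-shannonLength x) < 1 :=
  (zpow_neg_shannonLength_le hx0).trans_lt hx1

lemma one_le_shannonLength {x : ℝ} (hx0 : 0 < x) (hx1 : x < 1) : 1 ≤ shannonLength x := by
  have := logb_neg one_lt_two hx0 hx1
  rw [shannonLength, Int.one_le_ceil_iff]
  linarith

lemma shannonLength_add_logb_lt (x : ℝ) : (shannonLength x : ℝ) + logb 2 x < 1 := by
  have := Int.ceil_lt_add_one (-logb 2 x)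
  rw [shannonLength]
  linarith

section FirstOrder

variable {ι : Type*} {p : ι → ℝ} {a : ι}

variable (p a) in
noncomputable def firstOrderScale : ℝ := (1 - (2 : ℝ) ^ (-shannonLength (p a))) / (1 - p a)

lemma one_sub_mul_firstOrderScale (ha1 : p a < 1) :
    (1 - p a) * firstOrderScale p a = 1 - (2 : ℝ) ^ (-shannonLength (p a)) := by
  rw [firstOrderScale]
  field_simp [(sub_pos.mpr ha1).ne']

lemma firstOrderScale_pos (ha0 : 0 < p a) (ha1 : p a < 1) : 0 < firstOrderScale p a :=
  div_pos (sub_pos.mpr (zpow_neg_shannonLength_lt_one ha0 ha1)) (sub_pos.mpr ha1)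

variable [DecidableEq ι]

variable (p a) in
noncomputable def firstOrderShannonCode (i : ι) : ℤ :=
  if i = a then shannonLength (p a) else shannonLength (p i * firstOrderScale p a)

lemma firstOrderShannonCode_self : firstOrderShannonCode p a a = shannonLength (p a) :=
  if_pos rfl

lemma firstOrderShannonCode_of_ne {i : ι} (hi : i ≠ a) :
    firstOrderShannonCode p a i = shannonLength (p i * firstOrderScale p a) :=
  if_neg hi

lemma firstOrderShannonCode_add_logb_lt (hpos : ∀ i, 0 < p i) (ha1 : p a < 1) {i : ι}
    (hi : i ≠ a) :
    (firstOrderShannonCode p a i : ℝ) + logb 2 (p i) <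
      1 + logb 2 ((1 - p a) / (1 - (2 : ℝ) ^ (-shannonLength (p a)))) := by
  have hc := firstOrderScale_pos (hpos a) ha1
  have hinv : logb 2 ((1 - p a) / (1 - (2 : ℝ) ^ (-shannonLength (p a))))
      = -logb 2 (firstOrderScale p a) := by
    rw [firstOrderScale, ← logb_inv, inv_div]
  have := shannonLength_add_logb_lt (p i * firstOrderScale p a)
  rw [firstOrderShannonCode_of_ne hi, hinv]
  rw [logb_mul (hpos i).ne' hc.ne'] at this
  linarith

variable [Fintype ι]

lemma le_one_sub_of_ne (hpos : ∀ i, 0 ≤ p i) (hsum : ∑ i, p i = 1) {i : ι} (hi : i ≠ a) :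
    p i ≤ 1 - p a := by
  have := single_le_sum (fun j _ => hpos j) (mem_erase.mpr ⟨hi, mem_univ i⟩)
  rwa [sum_erase_eq_sub (mem_univ a), hsum] at this

lemma one_le_firstOrderShannonCode (hpos : ∀ i, 0 < p i) (hsum : ∑ i, p i = 1) (ha1 : p a < 1)
    (i : ι) : 1 ≤ firstOrderShannonCode p a i := by
  rcases eq_or_ne i a with rfl | hi
  · rw [firstOrderShannonCode_self]
    exact one_le_shannonLength (hpos i) ha1
  · have hc := firstOrderScale_pos (hpos a) ha1
    rw [firstOrderShannonCode_of_ne hi]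
    refine one_le_shannonLength (mul_pos (hpos i) hc) ?_
    calc p i * firstOrderScale p a ≤ (1 - p a) * firstOrderScale p a :=
          mul_le_mul_of_nonneg_right (le_one_sub_of_ne (fun j => (hpos j).le) hsum hi) hc.le
      _ = 1 - (2 : ℝ) ^ (-shannonLength (p a)) := one_sub_mul_firstOrderScale ha1
      _ < 1 := sub_lt_self 1 (zpow_pos two_pos _)

lemma sum_zpow_neg_firstOrderShannonCode_le_one (hpos : ∀ i, 0 < p i) (hsum : ∑ i, p i = 1)
    (ha1 : p a < 1) : ∑ i, (2 : ℝ) ^ (-firstOrderShannonCode p a i) ≤ 1 := by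
  have hc := firstOrderScale_pos (hpos a) ha1
  have hrest : ∑ i ∈ univ.erase a, (2 : ℝ) ^ (-firstOrderShannonCode p a i)
      ≤ 1 - (2 : ℝ) ^ (-shannonLength (p a)) :=
    calc ∑ i ∈ univ.erase a, (2 : ℝ) ^ (-firstOrderShannonCode p a i)
        ≤ ∑ i ∈ univ.erase a, p i * firstOrderScale p a := by
          refine sum_le_sum fun i hi => ?_
          rw [firstOrderShannonCode_of_ne (ne_of_mem_erase hi)]
          exact zpow_neg_shannonLength_le (mul_pos (hpos i) hc)
      _ = (1 - p a) * firstOrderScale p a := by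
          rw [← sum_mul, sum_erase_eq_sub (mem_univ a), hsum]
      _ = 1 - (2 : ℝ) ^ (-shannonLength (p a)) := one_sub_mul_firstOrderScale ha1
  rw [← add_sum_erase univ _ (mem_univ a), firstOrderShannonCode_self]
  linarith

end FirstOrder

theorem stmt10 (n : ℕ) (hn : 2 ≤ n) (p : Fin n → ℝ) (hp : IsSource n p)
    (lam : ℤ) (hlam : lam = ⌈-Real.logb 2 (p ⟨0, by omega⟩)⌉)
    (l1 : Fin n → ℤ)
    (h0 : l1 ⟨0, by omega⟩ = lam)
    (hi : ∀ i : Fin n, 0 < i.val →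
      l1 i = ⌈-Real.logb 2 (p i * ((1 - (2:ℝ) ^ (-lam)) / (1 - p ⟨0, by omega⟩)))⌉) :
    IsCLV n l1 ∧
      ∀ i : Fin n, 0 < i.val →
        (l1 i : ℝ) + Real.logb 2 (p i) <
          1 + Real.logb 2 ((1 - p ⟨0, by omega⟩) / (1 - (2:ℝ) ^ (-lam))) := by
  obtain ⟨hpos, hsum, -⟩ := hp
  have hn0 : 0 < n := by omega
  have hne : ∀ i : Fin n, 0 < i.val → i ≠ ⟨0, hn0⟩ := fun i h => Fin.ne_of_val_ne h.ne'
  have ha1 : p ⟨0, hn0⟩ < 1 := by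
    have := le_one_sub_of_ne (fun j => (hpos j).le) hsum (hne ⟨1, by omega⟩ one_pos).symm
    linarith [hpos ⟨1, by omega⟩]
  have hl1 : l1 = firstOrderShannonCode p ⟨0, hn0⟩ := by
    funext i
    rcases eq_or_ne i ⟨0, hn0⟩ with rfl | hi0
    · rw [firstOrderShannonCode_self, h0, hlam, shannonLength]
    · rw [firstOrderShannonCode_of_ne hi0, hi i (Nat.pos_of_ne_zero (Fin.val_ne_of_ne hi0)), hlam]
      rfl
  rw [hl1, hlam]
  exact ⟨⟨one_le_firstOrderShannonCode hpos hsum ha1,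
    sum_zpow_neg_firstOrderShannonCode_le_one hpos hsum ha1⟩,
    fun i hi0 => firstOrderShannonCode_add_logb_lt hpos ha1 (hne i hi0)⟩
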